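/- Let (Q,ν) be a σ-finite measure space, h, h_k = min(h, k) for k > 0 nonnegative measurable with ∫ h^q dν < ∞ for some 1 < q < 2, and let dζ = h^q dν. Suppose for all β ∈ (β₀, ∞): ∫_{{h_k > β}} h_k^{2-q} dζ ≤ c β^{2-q} ζ({h_k > δβ}) with constants c > 0, δ ∈ (0,1). Then there exists ε > 0 depending only on c, q, δ such that ∫_{{h_k > β₀}} h_k^{2+ε-q} dζ ≤ C β₀^ε ∫_{{h_k > δβ₀}} h_k^{2-q} dζ with C depending only on c, q, δ, uniformly in k; letting k → ∞ yields the same inequality for h. -/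

import Mathlib

open MeasureTheory Set

section GehringAux
variable {Q : Type*} [MeasurableSpace Q]

private lemma key_layer (μ : Measure Q) [IsFiniteMeasure μ] (g : Q → ℝ)
    (hg : Measurable g) {p a : ℝ} (hp : 0 < p) (ha : 0 < a) :
    ∫⁻ x in {x | a < g x}, ENNReal.ofReal (g x ^ p) ∂μ
      = ENNReal.ofReal (a ^ p) * μ {x | a < g x}
        + ENNReal.ofReal p *
          ∫⁻ t in Ioi a, μ {x | t < g x} * ENNReal.ofReal (t ^ (p - 1)) := by
  have hA : MeasurableSet {x | a < g x} := measurableSet_lt measurable_const hg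
  set A := {x | a < g x} with hAdef
  have hnn : 0 ≤ᵐ[μ.restrict A] g := by
    filter_upwards [self_mem_ae_restrict hA] with x hx
    exact le_of_lt (lt_trans ha hx)
  have key := lintegral_rpow_eq_lintegral_meas_lt_mul (μ.restrict A) hnn
    hg.aemeasurable hp
  rw [key]
  have hsplit : (Ioi (0:ℝ)) = Ioc 0 a ∪ Ioi a := (Ioc_union_Ioi_eq_Ioi ha.le).symm
  have hres : ∀ t : ℝ, (μ.restrict A) {x | t < g x} = μ ({x | t < g x} ∩ A) := by
    intro t
    exact Measure.restrict_apply (measurableSet_lt measurable_const hg)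
  rw [hsplit, lintegral_union measurableSet_Ioi (Ioc_disjoint_Ioi le_rfl)]
  have h1 : ∫⁻ t in Ioc 0 a, (μ.restrict A) {x | t < g x} * ENNReal.ofReal (t ^ (p - 1))
      = μ A * ∫⁻ t in Ioc 0 a, ENNReal.ofReal (t ^ (p - 1)) := by
    rw [← lintegral_const_mul' _ _ (measure_ne_top _ _)]
    apply setLIntegral_congr_fun measurableSet_Ioc
    intro t ht
    have : {x | t < g x} ∩ A = A := by
      apply inter_eq_self_of_subset_right
      intro x hx
      exact lt_of_le_of_lt ht.2 hx
    dsimp only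
    rw [hres, this]
  have h2 : ∫⁻ t in Ioi a, (μ.restrict A) {x | t < g x} * ENNReal.ofReal (t ^ (p - 1))
      = ∫⁻ t in Ioi a, μ {x | t < g x} * ENNReal.ofReal (t ^ (p - 1)) := by
    apply setLIntegral_congr_fun measurableSet_Ioi
    intro t ht
    have : {x | t < g x} ∩ A = {x | t < g x} := by
      apply inter_eq_self_of_subset_left
      intro x hx
      exact lt_trans (show a < t from ht) (show t < g x from hx)
    dsimp only
    rw [hres, this]
  have h3 : ∫⁻ t in Ioc 0 a, ENNReal.ofReal (t ^ (p - 1)) = ENNReal.ofReal (a ^ p / p) := by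
    have hint : IntervalIntegrable (fun t : ℝ => t ^ (p-1)) volume 0 a :=
      intervalIntegral.intervalIntegrable_rpow' (by linarith)
    have hi : IntegrableOn (fun t : ℝ => t ^ (p-1)) (Ioc 0 a) volume :=
      (intervalIntegrable_iff_integrableOn_Ioc_of_le ha.le).mp hint
    rw [← ofReal_integral_eq_lintegral_ofReal hi]
    · congr 1
      rw [← intervalIntegral.integral_of_le ha.le]
      rw [integral_rpow (Or.inl (by linarith))]
      rw [Real.zero_rpow (by linarith : p - 1 + 1 ≠ 0)]
      ring_nf
    · filter_upwards [self_mem_ae_restrict (measurableSet_Ioc : MeasurableSet (Ioc (0:ℝ) a))]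
        with t ht
      exact Real.rpow_nonneg ht.1.le _
  rw [h1, h2, h3, mul_add]
  congr 1
  calc ENNReal.ofReal p * (μ A * ENNReal.ofReal (a ^ p / p))
      = (ENNReal.ofReal p * ENNReal.ofReal (a ^ p / p)) * μ A := by ring
    _ = ENNReal.ofReal (a ^ p) * μ A := by
        rw [← ENNReal.ofReal_mul hp.le, mul_div_cancel₀ _ hp.ne']


private lemma absorb {S a : ENNReal} (hS : S ≠ ⊤)
    (h : S ≤ a + ENNReal.ofReal (1/2) * (a + S)) : S ≤ ENNReal.ofReal 3 * a := by
  have h2 : ENNReal.ofReal (1/2) * S + ENNReal.ofReal (1/2) * S = S := by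
    rw [← add_mul, ← ENNReal.ofReal_add (by norm_num) (by norm_num)]
    norm_num
  have h3 : ENNReal.ofReal (1/2) * S + ENNReal.ofReal (1/2) * S
      ≤ (a + ENNReal.ofReal (1/2) * a) + ENNReal.ofReal (1/2) * S := by
    rw [h2]
    calc S ≤ a + ENNReal.ofReal (1/2) * (a + S) := h
      _ = (a + ENNReal.ofReal (1/2) * a) + ENNReal.ofReal (1/2) * S := by
          rw [mul_add]; ring
  have h4 : ENNReal.ofReal (1/2) * S ≤ a + ENNReal.ofReal (1/2) * a :=
    (ENNReal.add_le_add_iff_right (ENNReal.mul_ne_top ENNReal.ofReal_ne_top hS)).mp h3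
  have h5 : S = ENNReal.ofReal 2 * (ENNReal.ofReal (1/2) * S) := by
    rw [← mul_assoc, ← ENNReal.ofReal_mul (by norm_num)]
    norm_num
  calc S = ENNReal.ofReal 2 * (ENNReal.ofReal (1/2) * S) := h5
    _ ≤ ENNReal.ofReal 2 * (a + ENNReal.ofReal (1/2) * a) := by
        exact mul_le_mul_right h4 _
    _ = (ENNReal.ofReal 2 + ENNReal.ofReal 2 * ENNReal.ofReal (1/2)) * a := by
        rw [mul_add, ← mul_assoc]; ring
    _ = ENNReal.ofReal 3 * a := by
        rw [← ENNReal.ofReal_mul (by norm_num), ← ENNReal.ofReal_add (by norm_num) (by norm_num)]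
        norm_num


private lemma gehring_abs (μ : Measure Q) [IsFiniteMeasure μ]
    (g : Q → ℝ) (hg : Measurable g) (hgnn : ∀ x, 0 ≤ g x) (M : ℝ) (hgM : ∀ x, g x ≤ M)
    {p c δ β₀ ε : ℝ} (hp0 : 0 < p) (hc : 0 < c) (hδ0 : 0 < δ) (hδ1 : δ < 1)
    (hβ₀ : 0 < β₀) (hε0 : 0 < ε)
    (hεsmall : c * ε * δ⁻¹ ^ (p + ε) / (p + ε) ≤ 1 / 2)
    (hyp : ∀ β > β₀, ∫⁻ x in {x | β < g x}, ENNReal.ofReal (g x ^ p) ∂μ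
        ≤ ENNReal.ofReal (c * β ^ p) * μ {x | δ * β < g x}) :
    ∫⁻ x in {x | β₀ < g x}, ENNReal.ofReal (g x ^ (p + ε)) ∂μ
      ≤ ENNReal.ofReal (3 * β₀ ^ ε) *
        ∫⁻ x in {x | δ * β₀ < g x}, ENNReal.ofReal (g x ^ p) ∂μ := by
  have hpε : 0 < p + ε := by linarith
  have hlt : ∀ t : ℝ, MeasurableSet {x | t < g x} :=
    fun t => measurableSet_lt measurable_const hg
  have hgp : Measurable fun x => ENNReal.ofReal (g x ^ p) :=
    (hg.pow measurable_const).ennreal_ofReal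
  set μ' := μ.withDensity (fun x => ENNReal.ofReal (g x ^ p)) with hμ'def
  have hμ'app : ∀ t : ℝ, μ' {x | t < g x}
      = ∫⁻ x in {x | t < g x}, ENNReal.ofReal (g x ^ p) ∂μ :=
    fun t => withDensity_apply _ (hlt t)
  haveI : IsFiniteMeasure μ' := by
    apply isFiniteMeasure_withDensity
    apply ne_top_of_le_ne_top
      (ENNReal.mul_ne_top ENNReal.ofReal_ne_top (measure_ne_top μ univ))
    calc ∫⁻ x, ENNReal.ofReal (g x ^ p) ∂μ
        ≤ ∫⁻ _, ENNReal.ofReal (max M 1 ^ p) ∂μ := by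
          apply lintegral_mono; intro x
          exact ENNReal.ofReal_le_ofReal
            (Real.rpow_le_rpow (hgnn x) (le_max_of_le_left (hgM x)) hp0.le)
      _ = ENNReal.ofReal (max M 1 ^ p) * μ univ := lintegral_const _
  set S := ∫⁻ x in {x | β₀ < g x}, ENNReal.ofReal (g x ^ (p + ε)) ∂μ with hSdef
  set G := ∫⁻ x in {x | δ * β₀ < g x}, ENNReal.ofReal (g x ^ p) ∂μ with hGdef
  set S'' := ∫⁻ x in {x | δ * β₀ < g x}, ENNReal.ofReal (g x ^ (p + ε)) ∂μ with hS''def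
  -- S as an integral against μ'
  have hSrepr : ∫⁻ x in {x | β₀ < g x}, ENNReal.ofReal (g x ^ ε) ∂μ' = S := by
    rw [hμ'def, restrict_withDensity (hlt β₀),
      lintegral_withDensity_eq_lintegral_mul _ hgp ((hg.pow measurable_const).ennreal_ofReal)]
    apply setLIntegral_congr_fun (hlt β₀)
    intro x hx
    have hx0 : 0 < g x := lt_trans hβ₀ hx
    simp only [Pi.mul_apply]
    rw [← ENNReal.ofReal_mul (Real.rpow_nonneg (hgnn x) p), ← Real.rpow_add hx0]
  have hkey1 := key_layer μ' g hg hε0 hβ₀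
  rw [hSrepr] at hkey1
  -- bound the tail integral of μ' using the hypothesis
  have htail : ENNReal.ofReal ε *
      ∫⁻ t in Ioi β₀, μ' {x | t < g x} * ENNReal.ofReal (t ^ (ε - 1))
      ≤ ENNReal.ofReal (1/2) * S'' := by
    have hJ : ∫⁻ t in Ioi β₀, μ' {x | t < g x} * ENNReal.ofReal (t ^ (ε - 1))
        ≤ ENNReal.ofReal c *
          ∫⁻ t in Ioi β₀, μ {x | t < g x / δ} * ENNReal.ofReal (t ^ (p + ε - 1)) := by
      rw [← lintegral_const_mul' _ _ ENNReal.ofReal_ne_top]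
      apply setLIntegral_mono' measurableSet_Ioi
      intro t ht
      have ht0 : 0 < t := lt_trans hβ₀ ht
      have hset : {x | δ * t < g x} = {x | t < g x / δ} := by
        ext x; simp only [mem_setOf_eq, lt_div_iff₀ hδ0]
        constructor <;> intro <;> linarith [mul_comm δ t, mul_comm t δ]
      calc μ' {x | t < g x} * ENNReal.ofReal (t ^ (ε - 1))
          ≤ (ENNReal.ofReal (c * t ^ p) * μ {x | δ * t < g x}) * ENNReal.ofReal (t ^ (ε - 1)) := by
            rw [hμ'app]
            exact mul_le_mul_left (hyp t ht) _
        _ = ENNReal.ofReal c * (μ {x | t < g x / δ} * ENNReal.ofReal (t ^ (p + ε - 1))) := by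
            rw [hset, ENNReal.ofReal_mul hc.le,
              show (p + ε - 1) = p + (ε - 1) by ring, Real.rpow_add ht0,
              ENNReal.ofReal_mul (Real.rpow_nonneg ht0.le p)]
            ring
    -- layer cake for g/δ with exponent p+ε
    have hkey2 := key_layer μ (fun x => g x / δ) (hg.div_const δ) hpε hβ₀
    have hset2 : {x | β₀ < g x / δ} = {x | δ * β₀ < g x} := by
      ext x; simp only [mem_setOf_eq, lt_div_iff₀ hδ0]
      constructor <;> intro <;> linarith [mul_comm δ β₀, mul_comm β₀ δ]
    have hJbound : ENNReal.ofReal (p + ε) *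
        ∫⁻ t in Ioi β₀, μ {x | t < g x / δ} * ENNReal.ofReal (t ^ (p + ε - 1))
        ≤ ENNReal.ofReal (δ⁻¹ ^ (p + ε)) * S'' := by
      calc ENNReal.ofReal (p + ε) *
          ∫⁻ t in Ioi β₀, μ {x | t < g x / δ} * ENNReal.ofReal (t ^ (p + ε - 1))
          ≤ ∫⁻ x in {x | β₀ < g x / δ}, ENNReal.ofReal ((g x / δ) ^ (p + ε)) ∂μ := by
            rw [hkey2]; exact le_add_self
        _ = ENNReal.ofReal (δ⁻¹ ^ (p + ε)) * S'' := by
            rw [hset2, hS''def, ← lintegral_const_mul' _ _ ENNReal.ofReal_ne_top]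
            apply setLIntegral_congr_fun (hlt (δ * β₀))
            intro x hx
            dsimp only
            rw [Real.div_rpow (hgnn x) hδ0.le, ← ENNReal.ofReal_mul
              (Real.rpow_nonneg (by positivity) _), Real.inv_rpow hδ0.le]
            rw [inv_mul_eq_div]
    calc ENNReal.ofReal ε *
        ∫⁻ t in Ioi β₀, μ' {x | t < g x} * ENNReal.ofReal (t ^ (ε - 1))
        ≤ ENNReal.ofReal ε * (ENNReal.ofReal c *
            ∫⁻ t in Ioi β₀, μ {x | t < g x / δ} * ENNReal.ofReal (t ^ (p + ε - 1))) :=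
          mul_le_mul_right hJ _
      _ = ENNReal.ofReal (c * ε / (p + ε)) * (ENNReal.ofReal (p + ε) *
            ∫⁻ t in Ioi β₀, μ {x | t < g x / δ} * ENNReal.ofReal (t ^ (p + ε - 1))) := by
          rw [← mul_assoc, ← mul_assoc, ← ENNReal.ofReal_mul hε0.le,
            ← ENNReal.ofReal_mul (by positivity)]
          congr 2
          field_simp
      _ ≤ ENNReal.ofReal (c * ε / (p + ε)) * (ENNReal.ofReal (δ⁻¹ ^ (p + ε)) * S'') :=
          mul_le_mul_right hJbound _
      _ = ENNReal.ofReal (c * ε * δ⁻¹ ^ (p + ε) / (p + ε)) * S'' := by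
          rw [← mul_assoc, ← ENNReal.ofReal_mul (by positivity)]
          congr 2
          ring
      _ ≤ ENNReal.ofReal (1/2) * S'' := by
          exact mul_le_mul_left (ENNReal.ofReal_le_ofReal hεsmall) _
  -- S'' ≤ β₀^ε * G + S
  have hS'' : S'' ≤ ENNReal.ofReal (β₀ ^ ε) * G + S := by
    have hsub : {x | β₀ < g x} ⊆ {x | δ * β₀ < g x} := by
      intro x hx
      have : δ * β₀ < β₀ := by nlinarith
      exact lt_trans this hx
    have hdecomp : {x | δ * β₀ < g x}
        = ({x | δ * β₀ < g x} \ {x | β₀ < g x}) ∪ {x | β₀ < g x} :=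
      (diff_union_of_subset hsub).symm
    rw [hS''def, hdecomp,
      lintegral_union (hlt β₀) disjoint_sdiff_left]
    gcongr
    · calc ∫⁻ x in {x | δ * β₀ < g x} \ {x | β₀ < g x},
            ENNReal.ofReal (g x ^ (p + ε)) ∂μ
          ≤ ∫⁻ x in {x | δ * β₀ < g x} \ {x | β₀ < g x},
            ENNReal.ofReal (β₀ ^ ε * g x ^ p) ∂μ := by
            apply setLIntegral_mono' ((hlt _).diff (hlt β₀))
            intro x hx
            apply ENNReal.ofReal_le_ofReal
            have hx1 : 0 < g x := lt_trans (by positivity) hx.1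
            have hx2 : g x ≤ β₀ := not_lt.mp hx.2
            calc g x ^ (p + ε) = g x ^ p * g x ^ ε := by rw [← Real.rpow_add hx1]
              _ ≤ g x ^ p * β₀ ^ ε :=
                  mul_le_mul_of_nonneg_left (Real.rpow_le_rpow hx1.le hx2 hε0.le)
                    (Real.rpow_nonneg hx1.le p)
              _ = β₀ ^ ε * g x ^ p := by ring
        _ = ENNReal.ofReal (β₀ ^ ε) *
            ∫⁻ x in {x | δ * β₀ < g x} \ {x | β₀ < g x}, ENNReal.ofReal (g x ^ p) ∂μ := by
            rw [← lintegral_const_mul' _ _ ENNReal.ofReal_ne_top]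
            congr 1
            ext x
            rw [ENNReal.ofReal_mul (by positivity)]
        _ ≤ ENNReal.ofReal (β₀ ^ ε) * G :=
            mul_le_mul_right (lintegral_mono_set diff_subset) _
  -- μ' {β₀ < g} ≤ G
  have hμ'G : μ' {x | β₀ < g x} ≤ G := by
    rw [hμ'app]
    apply lintegral_mono_set
    intro x hx
    have : δ * β₀ < β₀ := by nlinarith
    exact lt_trans this hx
  -- finiteness of S
  have hSfin : S ≠ ⊤ := by
    have : S ≤ ENNReal.ofReal (max M 1 ^ (p + ε)) * μ univ := by
      calc S ≤ ∫⁻ _ in {x | β₀ < g x}, ENNReal.ofReal (max M 1 ^ (p + ε)) ∂μ := by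
            apply setLIntegral_mono' (hlt β₀)
            intro x _
            exact ENNReal.ofReal_le_ofReal
              (Real.rpow_le_rpow (hgnn x) (le_max_of_le_left (hgM x)) hpε.le)
        _ ≤ ∫⁻ _, ENNReal.ofReal (max M 1 ^ (p + ε)) ∂μ :=
            setLIntegral_le_lintegral _ _
        _ = ENNReal.ofReal (max M 1 ^ (p + ε)) * μ univ := lintegral_const _
    exact ne_top_of_le_ne_top (ENNReal.mul_ne_top ENNReal.ofReal_ne_top (measure_ne_top _ _)) this
  -- combine
  have hmain : S ≤ ENNReal.ofReal (β₀ ^ ε) * G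
      + ENNReal.ofReal (1/2) * (ENNReal.ofReal (β₀ ^ ε) * G + S) := by
    calc S = ENNReal.ofReal (β₀ ^ ε) * μ' {x | β₀ < g x}
          + ENNReal.ofReal ε *
            ∫⁻ t in Ioi β₀, μ' {x | t < g x} * ENNReal.ofReal (t ^ (ε - 1)) := hkey1
      _ ≤ ENNReal.ofReal (β₀ ^ ε) * G + ENNReal.ofReal (1/2) * S'' :=
          add_le_add (mul_le_mul_right hμ'G _) htail
      _ ≤ ENNReal.ofReal (β₀ ^ ε) * G
          + ENNReal.ofReal (1/2) * (ENNReal.ofReal (β₀ ^ ε) * G + S) :=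
          add_le_add le_rfl (mul_le_mul_right hS'' _)
  have := absorb hSfin hmain
  calc S ≤ ENNReal.ofReal 3 * (ENNReal.ofReal (β₀ ^ ε) * G) := this
    _ = ENNReal.ofReal (3 * β₀ ^ ε) * G := by
        rw [← mul_assoc, ← ENNReal.ofReal_mul (by norm_num)]


end GehringAux

/-- Truncation argument in Gehring's lemma: the level-set inequality for the
truncations `h_k = min(h,k)` w.r.t. the measure `dζ = h^q dν` self-improves,
uniformly in `k`, and passes to the limit `k → ∞`. -/
theorem stmt16 {Q : Type*} [MeasurableSpace Q] (ν : Measure Q) [SigmaFinite ν]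
    (h : Q → ℝ) (hm : Measurable h) (hpos : ∀ x, 0 ≤ h x)
    (q : ℝ) (hq1 : 1 < q) (hq2 : q < 2)
    (hint : ∫⁻ x, ENNReal.ofReal (h x ^ q) ∂ν < ⊤)
    (c δ β₀ : ℝ) (hc : 0 < c) (hδ0 : 0 < δ) (hδ1 : δ < 1) (hβ₀ : 0 < β₀)
    (hyp : ∀ k > (0 : ℝ), ∀ β > β₀,
      ∫⁻ x in {x | β < min (h x) k}, ENNReal.ofReal ((min (h x) k) ^ (2 - q))
          ∂(ν.withDensity fun x => ENNReal.ofReal (h x ^ q))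
        ≤ ENNReal.ofReal (c * β ^ (2 - q)) *
          (ν.withDensity fun x => ENNReal.ofReal (h x ^ q)) {x | δ * β < min (h x) k}) :
    ∃ ε > 0, ∃ C > 0,
      (∀ k > (0 : ℝ),
        ∫⁻ x in {x | β₀ < min (h x) k}, ENNReal.ofReal ((min (h x) k) ^ (2 + ε - q))
            ∂(ν.withDensity fun x => ENNReal.ofReal (h x ^ q))
          ≤ ENNReal.ofReal (C * β₀ ^ ε) *
            ∫⁻ x in {x | δ * β₀ < min (h x) k},
              ENNReal.ofReal ((min (h x) k) ^ (2 - q))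
              ∂(ν.withDensity fun x => ENNReal.ofReal (h x ^ q)))
      ∧ ∫⁻ x in {x | β₀ < h x}, ENNReal.ofReal (h x ^ (2 + ε - q))
            ∂(ν.withDensity fun x => ENNReal.ofReal (h x ^ q))
          ≤ ENNReal.ofReal (C * β₀ ^ ε) *
            ∫⁻ x in {x | δ * β₀ < h x}, ENNReal.ofReal (h x ^ (2 - q))
              ∂(ν.withDensity fun x => ENNReal.ofReal (h x ^ q)) := by
  set ζ := ν.withDensity fun x => ENNReal.ofReal (h x ^ q) with hζdef
  haveI : IsFiniteMeasure ζ := isFiniteMeasure_withDensity hint.ne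
  have hp0 : (0:ℝ) < 2 - q := by linarith
  set ε := min 1 ((2 - q) * δ ^ 2 / (2 * c)) with hεdef
  have hε0 : 0 < ε := lt_min one_pos (by positivity)
  have hε1 : ε ≤ 1 := min_le_left _ _
  have hεsmall : c * ε * δ⁻¹ ^ ((2 - q) + ε) / ((2 - q) + ε) ≤ 1 / 2 := by
    have hδinv1 : (1:ℝ) ≤ δ⁻¹ := (one_le_inv₀ hδ0).mpr hδ1.le
    have h2 : δ⁻¹ ^ ((2 - q) + ε) ≤ (δ ^ 2)⁻¹ := by
      calc δ⁻¹ ^ ((2 - q) + ε) ≤ δ⁻¹ ^ (2:ℝ) :=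
            Real.rpow_le_rpow_of_exponent_le hδinv1 (by linarith)
        _ = (δ ^ 2)⁻¹ := by
            rw [show (2:ℝ) = ((2:ℕ):ℝ) by norm_num, Real.rpow_natCast, inv_pow]
    have step1 : c * ε * δ⁻¹ ^ ((2 - q) + ε) / ((2 - q) + ε)
        ≤ c * ε * (δ ^ 2)⁻¹ / (2 - q) := by
      gcongr <;> first | exact h2 | linarith | positivity
    have hεle : ε ≤ (2 - q) * δ ^ 2 / (2 * c) := min_le_right _ _
    have step2 : c * ε * (δ ^ 2)⁻¹ / (2 - q)
        ≤ c * ((2 - q) * δ ^ 2 / (2 * c)) * (δ ^ 2)⁻¹ / (2 - q) := by gcongr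
    have step3 : c * ((2 - q) * δ ^ 2 / (2 * c)) * (δ ^ 2)⁻¹ / (2 - q) = 1 / 2 := by
      field_simp
    linarith
  have habs : ∀ k > (0:ℝ),
      ∫⁻ x in {x | β₀ < min (h x) k}, ENNReal.ofReal ((min (h x) k) ^ (2 + ε - q)) ∂ζ
        ≤ ENNReal.ofReal (3 * β₀ ^ ε) *
          ∫⁻ x in {x | δ * β₀ < min (h x) k},
            ENNReal.ofReal ((min (h x) k) ^ (2 - q)) ∂ζ := by
    intro k hk
    have h1 := gehring_abs ζ (fun x => min (h x) k) (hm.min measurable_const)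
      (fun x => le_min (hpos x) hk.le) k (fun x => min_le_right _ _)
      hp0 hc hδ0 hδ1 hβ₀ hε0 hεsmall (hyp k hk)
    rw [show (2 - q) + ε = 2 + ε - q by ring] at h1
    exact h1
  refine ⟨ε, hε0, 3, by norm_num, habs, ?_⟩
  · -- limit k → ∞
    have key : ∀ (a e : ℝ), 0 < a → 0 < e →
        ∫⁻ x in {x | a < h x}, ENNReal.ofReal (h x ^ e) ∂ζ
          = ⨆ n : ℕ, ∫⁻ x in {x | a < min (h x) ((n:ℝ)+1)},
              ENNReal.ofReal (min (h x) ((n:ℝ)+1) ^ e) ∂ζ := by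
      intro a e ha he
      have hsets : ∀ n : ℕ, MeasurableSet {x | a < min (h x) ((n:ℝ)+1)} :=
        fun n => measurableSet_lt measurable_const (hm.min measurable_const)
      have hmeasn : ∀ n : ℕ, Measurable fun x =>
          ({x | a < min (h x) ((n:ℝ)+1)}).indicator
            (fun x => ENNReal.ofReal (min (h x) ((n:ℝ)+1) ^ e)) x := fun n =>
        (((hm.min measurable_const).pow measurable_const).ennreal_ofReal).indicator (hsets n)
      have hmono : Monotone fun (n:ℕ) => fun x =>
          ({x | a < min (h x) ((n:ℝ)+1)}).indicator
            (fun x => ENNReal.ofReal (min (h x) ((n:ℝ)+1) ^ e)) x := by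
        intro n m hnm x
        dsimp only
        by_cases hx : a < min (h x) ((n:ℝ)+1)
        · have hle : min (h x) ((n:ℝ)+1) ≤ min (h x) ((m:ℝ)+1) := by
            apply min_le_min le_rfl
            have : (n:ℝ) ≤ (m:ℝ) := Nat.cast_le.mpr hnm
            linarith
          have hx' : a < min (h x) ((m:ℝ)+1) := lt_of_lt_of_le hx hle
          rw [indicator_of_mem (show x ∈ {x | a < min (h x) ((n:ℝ)+1)} from hx),
            indicator_of_mem (show x ∈ {x | a < min (h x) ((m:ℝ)+1)} from hx')]
          exact ENNReal.ofReal_le_ofReal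
            (Real.rpow_le_rpow (le_min (hpos x) (by positivity)) hle he.le)
        · rw [indicator_of_notMem (show x ∉ {x | a < min (h x) ((n:ℝ)+1)} from hx)]
          exact zero_le
      have hsup : ∀ x, (⨆ n:ℕ, ({x | a < min (h x) ((n:ℝ)+1)}).indicator
            (fun x => ENNReal.ofReal (min (h x) ((n:ℝ)+1) ^ e)) x)
          = ({x | a < h x}).indicator (fun x => ENNReal.ofReal (h x ^ e)) x := by
        intro x
        by_cases hx : a < h x
        · obtain ⟨N, hN⟩ := exists_nat_ge (h x)
          have hmin : min (h x) ((N:ℝ)+1) = h x := min_eq_left (by linarith)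
          apply le_antisymm
          · apply iSup_le; intro n
            by_cases hxn : a < min (h x) ((n:ℝ)+1)
            · rw [indicator_of_mem (show x ∈ {x | a < min (h x) ((n:ℝ)+1)} from hxn),
                indicator_of_mem (show x ∈ {x | a < h x} from hx)]
              exact ENNReal.ofReal_le_ofReal
                (Real.rpow_le_rpow (le_min (hpos x) (by positivity))
                  (min_le_left _ _) he.le)
            · rw [indicator_of_notMem (show x ∉ {x | a < min (h x) ((n:ℝ)+1)} from hxn)]
              exact zero_le
          · refine le_trans ?_ (le_iSup _ N)
            have hxN : a < min (h x) ((N:ℝ)+1) := by rw [hmin]; exact hx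
            rw [indicator_of_mem (show x ∈ {x | a < h x} from hx),
              indicator_of_mem (show x ∈ {x | a < min (h x) ((N:ℝ)+1)} from hxN), hmin]
        · have hall : ∀ n:ℕ, ¬ (a < min (h x) ((n:ℝ)+1)) :=
            fun n hn => hx (lt_of_lt_of_le hn (min_le_left _ _))
          rw [indicator_of_notMem (show x ∉ {x | a < h x} from hx)]
          calc (⨆ n:ℕ, ({x | a < min (h x) ((n:ℝ)+1)}).indicator
                (fun x => ENNReal.ofReal (min (h x) ((n:ℝ)+1) ^ e)) x)
              = ⨆ _:ℕ, (0:ENNReal) :=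
                iSup_congr (fun n => indicator_of_notMem
                  (show x ∉ {x | a < min (h x) ((n:ℝ)+1)} from hall n) _)
            _ = 0 := by simp
      calc ∫⁻ x in {x | a < h x}, ENNReal.ofReal (h x ^ e) ∂ζ
          = ∫⁻ x, ({x | a < h x}).indicator (fun x => ENNReal.ofReal (h x ^ e)) x ∂ζ :=
            (lintegral_indicator (measurableSet_lt measurable_const hm) _).symm
        _ = ∫⁻ x, ⨆ n:ℕ, ({x | a < min (h x) ((n:ℝ)+1)}).indicator
              (fun x => ENNReal.ofReal (min (h x) ((n:ℝ)+1) ^ e)) x ∂ζ := by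
            apply lintegral_congr; intro x; rw [hsup]
        _ = ⨆ n:ℕ, ∫⁻ x, ({x | a < min (h x) ((n:ℝ)+1)}).indicator
              (fun x => ENNReal.ofReal (min (h x) ((n:ℝ)+1) ^ e)) x ∂ζ :=
            lintegral_iSup hmeasn hmono
        _ = ⨆ n:ℕ, ∫⁻ x in {x | a < min (h x) ((n:ℝ)+1)},
              ENNReal.ofReal (min (h x) ((n:ℝ)+1) ^ e) ∂ζ := by
            apply iSup_congr; intro n
            exact lintegral_indicator (hsets n) _
    have hRle : ∀ n : ℕ,
        ∫⁻ x in {x | δ * β₀ < min (h x) ((n:ℝ)+1)},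
            ENNReal.ofReal (min (h x) ((n:ℝ)+1) ^ (2 - q)) ∂ζ
          ≤ ∫⁻ x in {x | δ * β₀ < h x}, ENNReal.ofReal (h x ^ (2 - q)) ∂ζ := by
      intro n
      rw [← lintegral_indicator (measurableSet_lt measurable_const (hm.min measurable_const)) _,
        ← lintegral_indicator (measurableSet_lt measurable_const hm) _]
      apply lintegral_mono
      intro x
      by_cases hx : δ * β₀ < min (h x) ((n:ℝ)+1)
      · have hx' : δ * β₀ < h x := lt_of_lt_of_le hx (min_le_left _ _)
        rw [indicator_of_mem (show x ∈ {x | δ * β₀ < min (h x) ((n:ℝ)+1)} from hx),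
          indicator_of_mem (show x ∈ {x | δ * β₀ < h x} from hx')]
        exact ENNReal.ofReal_le_ofReal
          (Real.rpow_le_rpow (le_min (hpos x) (by positivity)) (min_le_left _ _)
            hp0.le)
      · rw [indicator_of_notMem (show x ∉ {x | δ * β₀ < min (h x) ((n:ℝ)+1)} from hx)]
        exact zero_le
    rw [key β₀ (2 + ε - q) hβ₀ (by linarith)]
    apply iSup_le
    intro n
    calc ∫⁻ x in {x | β₀ < min (h x) ((n:ℝ)+1)},
          ENNReal.ofReal (min (h x) ((n:ℝ)+1) ^ (2 + ε - q)) ∂ζ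
        ≤ ENNReal.ofReal (3 * β₀ ^ ε) *
          ∫⁻ x in {x | δ * β₀ < min (h x) ((n:ℝ)+1)},
            ENNReal.ofReal (min (h x) ((n:ℝ)+1) ^ (2 - q)) ∂ζ :=
          habs ((n:ℝ)+1) (by positivity)
      _ ≤ ENNReal.ofReal (3 * β₀ ^ ε) *
          ∫⁻ x in {x | δ * β₀ < h x}, ENNReal.ofReal (h x ^ (2 - q)) ∂ζ :=
          mul_le_mul_right (hRle n) _
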